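/- arXiv:2404.00574 — 2 statements merged into one kernel-verified Lean document; each statement's English description precedes it below -/
import Mathlib

section
/- Let α and β be exponent sequences with β stable, and assume there exist A, B > 0 with β_n ≤ A α_n + B for all n ∈ ℕ. Let θ : ℕ → ℂ satisfy θ ∈ Λ_1(β). Then there exists m ∈ ℕ such that for every positive integer k there is C > 0 with ∑_{j=0}^∞ |θ_{j+n}| · e^{-β_j/k} ≤ C · e^{m α_n} for all n ∈ ℕ (i.e., the Hankel operator H_θ : Λ_∞(α) → Λ_1(β) is continuous and satisfies the compactness condition, the index m being independent of k). -/
/-!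
Stability and monotonicity give `β (j + n) ≤ M (β j + β n)`, so that
`e^{-β_j/k} ≤ e^{-β_{j+n}/(Mk)} e^{β_n/k}`. Summing over `j`, the `n`-th column of the
Hankel matrix has `k`-th seminorm at most `e^{β_n/k}` times the `Mk`-th seminorm of `θ`,
which is finite since `θ ∈ Λ_1(β)`. Finally `β_n / k ≤ β_n ≤ B + ⌈A⌉ α_n`, so `m = ⌈A⌉`
works for every `k`.
-/

open Real

lemma apply_add_le_of_stable {β : ℕ → ℝ} {M : ℝ} (hβ_nonneg : ∀ n, 0 ≤ β n)
    (hβ_mono : Monotone β) (hM : 0 ≤ M) (hβ_stable : ∀ n, β (2 * n) ≤ M * β n) (j n : ℕ) :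
    β (j + n) ≤ M * (β j + β n) :=
  calc β (j + n) ≤ β (2 * max j n) := hβ_mono (by omega)
    _ ≤ M * β (max j n) := hβ_stable _
    _ ≤ M * (β j + β n) := by
        gcongr
        rcases le_total j n with h | h
        · simpa [max_eq_right h] using hβ_nonneg j
        · simpa [max_eq_left h] using hβ_nonneg n

lemma summable_mul_exp_neg_div_of_forall_nat {a β : ℕ → ℝ} (ha : ∀ n, 0 ≤ a n)
    (hβ : ∀ n, 0 ≤ β n) (h : ∀ k : ℕ, 0 < k → Summable fun n => a n * exp (-β n / k))
    {t : ℝ} (ht : 0 < t) : Summable fun n => a n * exp (-β n / t) := by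
  have hk : 0 < ⌈t⌉₊ := Nat.ceil_pos.mpr ht
  refine (h _ hk).of_nonneg_of_le (fun n => mul_nonneg (ha n) (exp_pos _).le) fun n => ?_
  refine mul_le_mul_of_nonneg_left (exp_le_exp.mpr ?_) (ha n)
  rw [neg_div, neg_div, neg_le_neg_iff]
  exact div_le_div_of_nonneg_left (hβ n) ht (Nat.le_ceil t)

lemma tsum_le_tsum_mul_of_le_shift {f g : ℕ → ℝ} {c : ℝ} (n : ℕ) (hf : ∀ j, 0 ≤ f j)
    (hg : ∀ i, 0 ≤ g i) (hg_summable : Summable g) (hc : 0 ≤ c)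
    (hfg : ∀ j, f j ≤ g (j + n) * c) : ∑' j, f j ≤ (∑' i, g i) * c := by
  have hshift : Summable fun j => g (j + n) * c :=
    (hg_summable.comp_injective (add_left_injective n)).mul_right c
  calc ∑' j, f j ≤ ∑' j, g (j + n) * c :=
        (hshift.of_nonneg_of_le hf hfg).tsum_le_tsum hfg hshift
    _ = (∑' j, g (j + n)) * c := tsum_mul_right
    _ ≤ (∑' i, g i) * c :=
        mul_le_mul_of_nonneg_right
          (tsum_comp_le_tsum_of_inj hg_summable hg (add_left_injective n)) hc

lemma tsum_hankel_column_le {a β : ℕ → ℝ} {M k : ℝ} (ha : ∀ n, 0 ≤ a n) (hM : 0 < M)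
    (hk : 0 < k) (hβ_add : ∀ j n, β (j + n) ≤ M * (β j + β n))
    (ha_summable : Summable fun i => a i * exp (-β i / (M * k))) (n : ℕ) :
    ∑' j, a (j + n) * exp (-β j / k) ≤
      (∑' i, a i * exp (-β i / (M * k))) * exp (β n / k) := by
  refine tsum_le_tsum_mul_of_le_shift n (fun j => mul_nonneg (ha _) (exp_pos _).le)
    (fun i => mul_nonneg (ha _) (exp_pos _).le) ha_summable (exp_pos _).le fun j => ?_
  rw [mul_assoc, ← exp_add]
  refine mul_le_mul_of_nonneg_left (exp_le_exp.mpr ?_) (ha _)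
  have : β (j + n) / (M * k) ≤ β j / k + β n / k := by
    rw [← add_div, div_le_div_iff₀ (mul_pos hM hk) hk]
    nlinarith [hβ_add j n]
  rw [neg_div, neg_div]
  linarith

theorem hankel_infinite_to_finite_compact_general
    (α β : ℕ → ℝ) (θ : ℕ → ℂ)
    (hα_nonneg : ∀ n, 0 ≤ α n)
    (hβ_nonneg : ∀ n, 0 ≤ β n) (hβ_mono : Monotone β)
    (hβ_stable : ∃ M : ℝ, 0 < M ∧ ∀ n : ℕ, β (2 * n) ≤ M * β n)
    (hAB : ∃ A B : ℝ, 0 < A ∧ 0 < B ∧ ∀ n : ℕ, β n ≤ A * α n + B)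
    (hθ : ∀ k : ℕ, 0 < k → Summable fun n : ℕ => ‖θ n‖ * Real.exp (-β n / (k : ℝ))) :
    ∃ m : ℕ, ∀ k : ℕ, 0 < k → ∃ C : ℝ, 0 < C ∧
      ∀ n : ℕ, (∑' j : ℕ, ‖θ (j + n)‖ * Real.exp (-β j / (k : ℝ))) ≤
        C * Real.exp ((m : ℝ) * α n) := by
  obtain ⟨M, hM, hM_stable⟩ := hβ_stable
  obtain ⟨A, B, -, -, hβ_le⟩ := hAB
  have hβ_add := apply_add_le_of_stable hβ_nonneg hβ_mono hM.le hM_stable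
  refine ⟨⌈A⌉₊, fun k hk => ?_⟩
  have hk_pos : (0 : ℝ) < k := Nat.cast_pos.mpr hk
  set S := ∑' i, ‖θ i‖ * exp (-β i / (M * k))
  have hS : 0 ≤ S := tsum_nonneg fun i => by positivity
  refine ⟨exp B * (S + 1), by positivity, fun n => ?_⟩
  have hexponent : β n / k ≤ B + ⌈A⌉₊ * α n :=
    calc β n / k ≤ β n := div_le_self (hβ_nonneg n) (Nat.one_le_cast.mpr hk)
      _ ≤ A * α n + B := hβ_le n
      _ ≤ B + ⌈A⌉₊ * α n := by nlinarith [Nat.le_ceil A, hα_nonneg n]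
  calc ∑' j, ‖θ (j + n)‖ * exp (-β j / k) ≤ S * exp (β n / k) :=
        tsum_hankel_column_le (fun _ => norm_nonneg _) hM hk_pos hβ_add
          (summable_mul_exp_neg_div_of_forall_nat (fun _ => norm_nonneg _) hβ_nonneg hθ
            (mul_pos hM hk_pos)) n
    _ ≤ (S + 1) * exp (B + ⌈A⌉₊ * α n) := by gcongr; linarith
    _ = exp B * (S + 1) * exp (⌈A⌉₊ * α n) := by rw [exp_add]; ring

/-- If `β` is stable, `β_n ≤ A α_n + B` and `θ ∈ Λ_1(β)`, then the Hankel
operator `H_θ : Λ_∞(α) → Λ_1(β)` is continuous and satisfies the compactness condition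
(the index `m` is independent of `k`). -/
theorem hankel_infinite_to_finite_compact
    (α β : ℕ → ℝ) (θ : ℕ → ℂ)
    (hα_nonneg : ∀ n, 0 ≤ α n) (hα_mono : Monotone α)
    (hα_tendsto : Filter.Tendsto α Filter.atTop Filter.atTop)
    (hβ_nonneg : ∀ n, 0 ≤ β n) (hβ_mono : Monotone β)
    (hβ_tendsto : Filter.Tendsto β Filter.atTop Filter.atTop)
    (hβ_stable : ∃ M : ℝ, 0 < M ∧ ∀ n : ℕ, β (2 * n) ≤ M * β n)
    (hAB : ∃ A B : ℝ, 0 < A ∧ 0 < B ∧ ∀ n : ℕ, β n ≤ A * α n + B)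
    (hθ : ∀ k : ℕ, 0 < k → Summable fun n : ℕ => ‖θ n‖ * Real.exp (-β n / (k : ℝ))) :
    ∃ m : ℕ, ∀ k : ℕ, 0 < k → ∃ C : ℝ, 0 < C ∧
      ∀ n : ℕ, (∑' j : ℕ, ‖θ (j + n)‖ * Real.exp (-β j / (k : ℝ))) ≤
        C * Real.exp ((m : ℝ) * α n) :=
  hankel_infinite_to_finite_compact_general α β θ hα_nonneg hβ_nonneg hβ_mono hβ_stable hAB hθ
end

section
/- Let α be an exponent sequence, let (b_{n,k}) be a Köthe matrix, and let θ : ℕ → ℂ belong to the dual of Λ_1(α), i.e., there exist a positive integer m₀ and C₀ > 0 with |θ_n| ≤ C₀ e^{-α_n/m₀} for all n. Assume that for every positive integer m the sequence (e^{-α_n/m})_n belongs to K(b_{n,k}), i.e., ∑_{n=0}^∞ e^{-α_n/m} b_{n,k} < ∞ for all k ∈ ℕ and positive integers m. Then there exists a positive integer m (one may take m = 2m₀) such that for every k ∈ ℕ there is C > 0 with ∑_{j=0}^∞ |θ_{j+n}| · b_{j,k} ≤ C · e^{-α_n/m} for all n ∈ ℕ (i.e., the Hankel operator H_θ : Λ_1(α)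 → K(b_{n,k}) is continuous and satisfies the compactness condition, the index m being independent of k). -/
/-! Since `α` is monotone, `α (j + n)` dominates both `α j` and `α n`, so
`e^{-α_{j+n}/m₀} ≤ e^{-α_n/(2m₀)} e^{-α_j/(2m₀)}`. Hence the decay of `θ` bounds the `n`-th column
sum `∑_j |θ_{j+n}| b_{j,k}` by `C₀ e^{-α_n/(2m₀)} ∑_j e^{-α_j/(2m₀)} b_{j,k}`, and the last series
converges because `(e^{-α_j/(2m₀)})_j ∈ K(b)`. -/

open Real

lemma Monotone.exp_neg_div_add_le {α : ℕ → ℝ} (hα : Monotone α) {m : ℝ} (hm : 0 ≤ m)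
    (j n : ℕ) : exp (-α (j + n) / m) ≤ exp (-α n / (2 * m)) * exp (-α j / (2 * m)) := by
  have hn : α n ≤ α (j + n) := hα (Nat.le_add_left n j)
  have hj : α j ≤ α (j + n) := hα (Nat.le_add_right j n)
  rw [← exp_add, exp_le_exp]
  calc -α (j + n) / m ≤ (-α n / 2 + -α j / 2) / m := div_le_div_of_nonneg_right (by linarith) hm
    _ = -α n / (2 * m) + -α j / (2 * m) := by ring

lemma norm_apply_add_le_mul_exp_half {E : Type*} [SeminormedAddGroup E] {α : ℕ → ℝ} {θ : ℕ → E} {m C : ℝ}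
    (hα : Monotone α) (hm : 0 ≤ m) (hC : 0 ≤ C) (hθ : ∀ n, ‖θ n‖ ≤ C * exp (-α n / m)) (j n : ℕ) :
    ‖θ (j + n)‖ ≤ C * exp (-α n / (2 * m)) * exp (-α j / (2 * m)) :=
  (hθ (j + n)).trans <| by rw [mul_assoc]; gcongr; exact hα.exp_neg_div_add_le hm j n

lemma tsum_le_mul_tsum_of_le_mul {ι : Type*} {f g : ι → ℝ} {c : ℝ} (hf : ∀ i, 0 ≤ f i)
    (hfg : ∀ i, f i ≤ c * g i) (hg : Summable g) : ∑' i, f i ≤ c * ∑' i, g i := by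
  rw [← tsum_mul_left]
  exact (hg.mul_left c).of_nonneg_of_le hf hfg |>.tsum_le_tsum hfg (hg.mul_left c)

theorem hankel_from_finite_type_compact_general
    (α : ℕ → ℝ) (b : ℕ → ℕ → ℝ) (θ : ℕ → ℂ)
    (hα_mono : Monotone α)
    (hb_nonneg : ∀ n k, 0 ≤ b n k)
    (hθ : ∃ m₀ : ℕ, 0 < m₀ ∧ ∃ C₀ : ℝ, 0 < C₀ ∧
      ∀ n : ℕ, ‖θ n‖ ≤ C₀ * Real.exp (-α n / (m₀ : ℝ)))
    (hcond : ∀ m : ℕ, 0 < m → ∀ k : ℕ,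
      Summable fun n : ℕ => Real.exp (-α n / (m : ℝ)) * b n k) :
    ∃ m : ℕ, 0 < m ∧ ∀ k : ℕ, ∃ C : ℝ, 0 < C ∧
      ∀ n : ℕ, (∑' j : ℕ, ‖θ (j + n)‖ * b j k) ≤ C * Real.exp (-α n / (m : ℝ)) := by
  obtain ⟨m₀, hm₀, C₀, hC₀, hθ_le⟩ := hθ
  refine ⟨2 * m₀, by positivity, fun k => ?_⟩
  set w : ℕ → ℝ := fun j => exp (-α j / (2 * m₀)) * b j k
  have hw : Summable w := by
    simpa only [w, Nat.cast_mul, Nat.cast_ofNat] using hcond (2 * m₀) (by positivity) k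
  have hS : 0 ≤ ∑' j, w j := tsum_nonneg fun j => mul_nonneg (exp_pos _).le (hb_nonneg j k)
  refine ⟨C₀ * (∑' j, w j + 1), by positivity, fun n => ?_⟩
  have hterm (j : ℕ) : ‖θ (j + n)‖ * b j k ≤ C₀ * exp (-α n / (2 * m₀)) * w j :=
    (mul_le_mul_of_nonneg_right (norm_apply_add_le_mul_exp_half hα_mono m₀.cast_nonneg hC₀.le hθ_le j n)
      (hb_nonneg j k)).trans_eq (by ring)
  calc ∑' j, ‖θ (j + n)‖ * b j k ≤ C₀ * exp (-α n / (2 * m₀)) * ∑' j, w j :=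
        tsum_le_mul_tsum_of_le_mul (fun j => mul_nonneg (norm_nonneg _) (hb_nonneg j k)) hterm hw
    _ ≤ C₀ * exp (-α n / (2 * m₀)) * (∑' j, w j + 1) := by gcongr; linarith
    _ = C₀ * (∑' j, w j + 1) * exp (-α n / ((2 * m₀ : ℕ) : ℝ)) := by push_cast; ring

/-- Let `α` be an exponent sequence and `θ` in the dual of `Λ_1(α)`. If
`(e^{-α_n/m})_n ∈ K(b)` for every positive integer `m`, then the Hankel operator
`H_θ : Λ_1(α) → K(b)` is continuous and satisfies the compactness condition (the index
`m` is independent of `k`). -/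
theorem hankel_from_finite_type_compact
    (α : ℕ → ℝ) (b : ℕ → ℕ → ℝ) (θ : ℕ → ℂ)
    (hα_nonneg : ∀ n, 0 ≤ α n) (hα_mono : Monotone α)
    (hα_tendsto : Filter.Tendsto α Filter.atTop Filter.atTop)
    (hb_nonneg : ∀ n k, 0 ≤ b n k) (hb_mono : ∀ n k, b n k ≤ b n (k + 1))
    (hb_pos : ∀ n, ∃ k, 0 < b n k)
    (hθ : ∃ m₀ : ℕ, 0 < m₀ ∧ ∃ C₀ : ℝ, 0 < C₀ ∧
      ∀ n : ℕ, ‖θ n‖ ≤ C₀ * Real.exp (-α n / (m₀ : ℝ)))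
    (hcond : ∀ m : ℕ, 0 < m → ∀ k : ℕ,
      Summable fun n : ℕ => Real.exp (-α n / (m : ℝ)) * b n k) :
    ∃ m : ℕ, 0 < m ∧ ∀ k : ℕ, ∃ C : ℝ, 0 < C ∧
      ∀ n : ℕ, (∑' j : ℕ, ‖θ (j + n)‖ * b j k) ≤ C * Real.exp (-α n / (m : ℝ)) :=
  hankel_from_finite_type_compact_general α b θ hα_mono hb_nonneg hθ hcond
end
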